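/- On ℝ³ with the metric g = ε(e^{2t} dx² + e^{-2t} dy²) + μ dt², there is no smooth function f : ℝ³ → ℝ such that grad(f) satisfies the Ricci soliton equation L_{grad f} g + ρ = λ g for any real λ. In other words, this metric is never a gradient Ricci soliton. -/

import Mathlib

open Real

noncomputable def pd {n : ℕ} (i : Fin n) (f : (Fin n → ℝ) → ℝ) (p : Fin n → ℝ) : ℝ :=
  fderiv ℝ f p (Pi.single i 1)

noncomputable def g3 (ε μ : ℝ) (p : Fin 3 → ℝ) : Matrix (Fin 3) (Fin 3) ℝ :=
  Matrix.diagonal ![ε * exp (2 * p 2), ε * exp (-2 * p 2), μ]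

noncomputable def ρ3 : Matrix (Fin 3) (Fin 3) ℝ := Matrix.diagonal ![0, 0, -2]

noncomputable def lieD {n : ℕ} (g : (Fin n → ℝ) → Matrix (Fin n) (Fin n) ℝ)
    (X : Fin n → (Fin n → ℝ) → ℝ) (i j : Fin n) (p : Fin n → ℝ) : ℝ :=
  (∑ k, X k p * pd k (fun q => g q i j) p)
    + (∑ k, g p k j * pd i (X k) p) + (∑ k, g p i k * pd j (X k) p)

/-- The gradient of f for the 3D metric:
grad f = (ε e^{-2t}∂_x f)∂_x + (ε e^{2t}∂_y f)∂_y + (μ⁻¹∂_t f)∂_t. -/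
noncomputable def grad3 (ε μ : ℝ) (f : (Fin 3 → ℝ) → ℝ) : Fin 3 → (Fin 3 → ℝ) → ℝ :=
  ![fun p => ε * exp (-2 * p 2) * pd 0 f p,
    fun p => ε * exp (2 * p 2) * pd 1 f p,
    fun p => μ⁻¹ * pd 2 f p]

section helpers
variable {n : ℕ}

lemma pd_congr {F G : (Fin n → ℝ) → ℝ} (h : ∀ q, F q = G q) (k : Fin n) (p : Fin n → ℝ) :
    pd k F p = pd k G p := by
  have : F = G := funext h
  rw [pd, pd, this]

lemma contDiff_pd {f : (Fin n → ℝ) → ℝ} (hf : ContDiff ℝ (⊤ : ℕ∞) f) (i : Fin n) :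
    ContDiff ℝ (⊤ : ℕ∞) (pd i f) :=
  (hf.fderiv_right (by simp)).clm_apply contDiff_const

lemma pd_const (c : ℝ) (k : Fin n) (p : Fin n → ℝ) : pd k (fun _ => c) p = 0 := by
  simp [pd]

lemma pd_symm {f : (Fin n → ℝ) → ℝ} (hf : ContDiff ℝ (⊤ : ℕ∞) f) (i j : Fin n) (p : Fin n → ℝ) :
    pd i (pd j f) p = pd j (pd i f) p := by
  have hd : Differentiable ℝ f := hf.differentiable (by simp)
  have hF : ContDiff ℝ (⊤ : ℕ∞) (fderiv ℝ f) := hf.fderiv_right (by simp)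
  have hFd : DifferentiableAt ℝ (fderiv ℝ f) p := (hF.differentiable (by simp)) p
  have key : ∀ v w : Fin n → ℝ,
      fderiv ℝ (fun q => fderiv ℝ f q v) p w = fderiv ℝ (fderiv ℝ f) p w v := by
    intro v w
    have h := fderiv_clm_apply (c := fderiv ℝ f) (u := fun _ => v) hFd (differentiableAt_const v)
    rw [show (fun q => fderiv ℝ f q v) = (fun q => (fderiv ℝ f q) ((fun _ => v) q)) from rfl, h]
    simp
  have hsymm := second_derivative_symmetric (f' := fderiv ℝ f) (f'' := fderiv ℝ (fderiv ℝ f) p)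
      (fun y => (hd y).hasFDerivAt) hFd.hasFDerivAt (Pi.single j 1) (Pi.single i 1)
  show fderiv ℝ (pd j f) p (Pi.single i 1) = fderiv ℝ (pd i f) p (Pi.single j 1)
  rw [show pd j f = fun q => fderiv ℝ f q (Pi.single j 1) from rfl,
      show pd i f = fun q => fderiv ℝ f q (Pi.single i 1) from rfl, key, key, hsymm]

lemma pd_add {F G : (Fin n → ℝ) → ℝ} {p : Fin n → ℝ} (hF : DifferentiableAt ℝ F p)
    (hG : DifferentiableAt ℝ G p) (k : Fin n) :
    pd k (fun q => F q + G q) p = pd k F p + pd k G p := by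
  simp [pd, fderiv_fun_add hF hG]

lemma pd_cmul {F : (Fin n → ℝ) → ℝ} {p : Fin n → ℝ} (hF : DifferentiableAt ℝ F p)
    (a : ℝ) (k : Fin n) : pd k (fun q => a * F q) p = a * pd k F p := by
  simp [pd, fderiv_const_mul hF]

lemma pd_mul {F G : (Fin n → ℝ) → ℝ} {p : Fin n → ℝ} (hF : DifferentiableAt ℝ F p)
    (hG : DifferentiableAt ℝ G p) (k : Fin n) :
    pd k (fun q => F q * G q) p = pd k F p * G p + F p * pd k G p := by
  simp [pd, fderiv_fun_mul hF hG]; ring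

lemma hasFDerivAt_exp_lin (c : ℝ) (i : Fin n) (p : Fin n → ℝ) :
    HasFDerivAt (fun q : Fin n → ℝ => exp (c * q i))
      (exp (c * p i) • (c • ContinuousLinearMap.proj (R := ℝ) (φ := fun _ : Fin n => ℝ) i)) p :=
  (((ContinuousLinearMap.proj (R := ℝ) (φ := fun _ : Fin n => ℝ) i).hasFDerivAt (x := p)).const_mul c).exp

lemma diff_exp_lin (c : ℝ) (i : Fin n) (p : Fin n → ℝ) :
    DifferentiableAt ℝ (fun q : Fin n → ℝ => exp (c * q i)) p :=
  (hasFDerivAt_exp_lin c i p).differentiableAt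

lemma pd_exp_lin (c : ℝ) (k i : Fin n) (p : Fin n → ℝ) :
    pd k (fun q => exp (c * q i)) p = exp (c * p i) * (c * (Pi.single k 1 : Fin n → ℝ) i) := by
  rw [pd, (hasFDerivAt_exp_lin c i p).fderiv]
  simp

end helpers

lemma pd_aexp (a c : ℝ) (k : Fin 3) (p : Fin 3 → ℝ) :
    pd k (fun q => a * exp (c * q 2)) p
      = a * (exp (c * p 2) * (c * (Pi.single k 1 : Fin 3 → ℝ) 2)) := by
  rw [pd_cmul (diff_exp_lin c 2 p), pd_exp_lin]

lemma pd_scaled {f : (Fin 3 → ℝ) → ℝ} (hf : ContDiff ℝ (⊤ : ℕ∞) f) (a c : ℝ) (i k : Fin 3)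
    (p : Fin 3 → ℝ) :
    pd k (fun q => a * exp (c * q 2) * pd i f q) p
      = a * exp (c * p 2) * (c * (Pi.single k 1 : Fin 3 → ℝ) 2 * pd i f p + pd k (pd i f) p) := by
  have h1 : DifferentiableAt ℝ (fun q : Fin 3 → ℝ => a * exp (c * q 2)) p :=
    (diff_exp_lin c 2 p).const_mul a
  have h2 : DifferentiableAt ℝ (pd i f) p := (contDiff_pd hf i).differentiable (by simp) p
  rw [pd_mul h1 h2, pd_cmul (diff_exp_lin c 2 p), pd_exp_lin]
  ring


lemma fin3_20 : ((2:Fin 3) = 0) ↔ False := by decide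
lemma fin3_21 : ((2:Fin 3) = 1) ↔ False := by decide
lemma fin3_02 : ((0:Fin 3) = 2) ↔ False := by decide
lemma fin3_12 : ((1:Fin 3) = 2) ↔ False := by decide
lemma fin3_01 : ((0:Fin 3) = 1) ↔ False := by decide
lemma fin3_10 : ((1:Fin 3) = 0) ↔ False := by decide

lemma pd_cmuls {f : (Fin 3 → ℝ) → ℝ} (hf : ContDiff ℝ (⊤ : ℕ∞) f) (a : ℝ) (i k : Fin 3)
    (p : Fin 3 → ℝ) : pd k (fun q => a * pd i f q) p = a * pd k (pd i f) p :=
  pd_cmul ((contDiff_pd hf i).differentiable (by simp) p) a k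

/-- The 3D generalized symmetric metric is never a gradient Ricci soliton. -/
theorem no_gradient_soliton_3d (ε μ : ℝ) (hε : ε = 1 ∨ ε = -1) (hμ : μ ≠ 0) :
    ¬ ∃ (f : (Fin 3 → ℝ) → ℝ) (lam : ℝ), ContDiff ℝ (⊤ : ℕ∞) f ∧
      ∀ p : Fin 3 → ℝ, ∀ i j : Fin 3,
        lieD (g3 ε μ) (grad3 ε μ f) i j p + ρ3 i j = lam * g3 ε μ p i j := by
  rintro ⟨f, lam, hf, H⟩
  have hε2 : ε * ε = 1 := by rcases hε with rfl | rfl <;> norm_num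
  have hμ1 : μ * μ⁻¹ = 1 := mul_inv_cancel₀ hμ
  have hexp : ∀ t : ℝ, exp (2*t) * exp (-2*t) = 1 := fun t => by
    rw [← exp_add]; norm_num
  have hdf1 : ∀ i : Fin 3, Differentiable ℝ (pd i f) := fun i =>
    (contDiff_pd hf i).differentiable (by simp)
  have hdf2 : ∀ i j : Fin 3, Differentiable ℝ (pd i (pd j f)) := fun i j =>
    (contDiff_pd (contDiff_pd hf j) i).differentiable (by simp)
  -- equation (0,2): f_{xt} = f_x
  have hD : ∀ p : Fin 3 → ℝ, pd 2 (pd 0 f) p = pd 0 f p := by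
    intro p
    have h02 := H p 0 2
    simp only [lieD, g3, ρ3, grad3, Fin.sum_univ_three, Matrix.diagonal_apply,
      Matrix.cons_val_zero, Matrix.cons_val_one, Matrix.head_cons, Matrix.cons_val_two,
      Matrix.tail_cons, if_true, if_false, pd_const, pd_aexp, pd_scaled hf,
      pd_cmuls hf] at h02
    simp only [Pi.single_apply, fin3_20, fin3_21, fin3_02, fin3_12, fin3_01, fin3_10,
      eq_self_iff_true, if_true, if_false, mul_zero, zero_mul, mul_one, one_mul, add_zero,
      zero_add, neg_zero, pd_const] at h02
    have hsym := pd_symm hf 0 2 p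
    linear_combination (1/2)*h02 - (1/2)*hsym - (1/2)*pd 0 (pd 2 f) p*hμ1
      - (1/2)*(-2*pd 0 f p + pd 2 (pd 0 f) p)*(exp (2*p 2)*exp (-2*p 2))*hε2
      - (1/2)*(-2*pd 0 f p + pd 2 (pd 0 f) p)*hexp (p 2)
  -- equation (1,2): f_{yt} = -f_y
  have hE : ∀ p : Fin 3 → ℝ, pd 2 (pd 1 f) p = (-1) * pd 1 f p := by
    intro p
    have h12 := H p 1 2
    simp only [lieD, g3, ρ3, grad3, Fin.sum_univ_three, Matrix.diagonal_apply,
      Matrix.cons_val_zero, Matrix.cons_val_one, Matrix.head_cons, Matrix.cons_val_two,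
      Matrix.tail_cons, if_true, if_false, pd_const, pd_aexp, pd_scaled hf,
      pd_cmuls hf] at h12
    simp only [Pi.single_apply, fin3_20, fin3_21, fin3_02, fin3_12, fin3_01, fin3_10,
      eq_self_iff_true, if_true, if_false, mul_zero, zero_mul, mul_one, one_mul, add_zero,
      zero_add, neg_zero, pd_const] at h12
    have hsym := pd_symm hf 1 2 p
    linear_combination (1/2)*h12 - (1/2)*hsym - (1/2)*pd 1 (pd 2 f) p*hμ1
      - (1/2)*(2*pd 1 f p + pd 2 (pd 1 f) p)*(exp (2*p 2)*exp (-2*p 2))*hε2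
      - (1/2)*(2*pd 1 f p + pd 2 (pd 1 f) p)*hexp (p 2)
  -- equation (0,0)
  have hA : ∀ p : Fin 3 → ℝ,
      2*ε*μ⁻¹*exp (2*p 2)*pd 2 f p + 2*pd 0 (pd 0 f) p = lam*ε*exp (2*p 2) := by
    intro p
    have h00 := H p 0 0
    simp only [lieD, g3, ρ3, grad3, Fin.sum_univ_three, Matrix.diagonal_apply,
      Matrix.cons_val_zero, Matrix.cons_val_one, Matrix.head_cons, Matrix.cons_val_two,
      Matrix.tail_cons, if_true, if_false, pd_const, pd_aexp, pd_scaled hf,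
      pd_cmuls hf] at h00
    simp only [Pi.single_apply, fin3_20, fin3_21, fin3_02, fin3_12, fin3_01, fin3_10,
      eq_self_iff_true, if_true, if_false, mul_zero, zero_mul, mul_one, one_mul, add_zero,
      zero_add, neg_zero, pd_const] at h00
    linear_combination h00 - 2*pd 0 (pd 0 f) p*(exp (2*p 2)*exp (-2*p 2))*hε2
      - 2*pd 0 (pd 0 f) p*hexp (p 2)
  -- equation (1,1)
  have hB : ∀ p : Fin 3 → ℝ,
      (-2)*ε*μ⁻¹*exp (-2*p 2)*pd 2 f p + 2*pd 1 (pd 1 f) p = lam*ε*exp (-2*p 2) := by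
    intro p
    have h11 := H p 1 1
    simp only [lieD, g3, ρ3, grad3, Fin.sum_univ_three, Matrix.diagonal_apply,
      Matrix.cons_val_zero, Matrix.cons_val_one, Matrix.head_cons, Matrix.cons_val_two,
      Matrix.tail_cons, if_true, if_false, pd_const, pd_aexp, pd_scaled hf,
      pd_cmuls hf] at h11
    simp only [Pi.single_apply, fin3_20, fin3_21, fin3_02, fin3_12, fin3_01, fin3_10,
      eq_self_iff_true, if_true, if_false, mul_zero, zero_mul, mul_one, one_mul, add_zero,
      zero_add, neg_zero, pd_const] at h11
    linear_combination h11 - 2*pd 1 (pd 1 f) p*(exp (2*p 2)*exp (-2*p 2))*hε2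
      - 2*pd 1 (pd 1 f) p*hexp (p 2)
  -- equation (2,2)
  have hC : ∀ p : Fin 3 → ℝ, 2*pd 2 (pd 2 f) p - 2 = lam*μ := by
    intro p
    have h22 := H p 2 2
    simp only [lieD, g3, ρ3, grad3, Fin.sum_univ_three, Matrix.diagonal_apply,
      Matrix.cons_val_zero, Matrix.cons_val_one, Matrix.head_cons, Matrix.cons_val_two,
      Matrix.tail_cons, if_true, if_false, pd_const, pd_aexp, pd_scaled hf,
      pd_cmuls hf] at h22
    simp only [Pi.single_apply, fin3_20, fin3_21, fin3_02, fin3_12, fin3_01, fin3_10,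
      eq_self_iff_true, if_true, if_false, mul_zero, zero_mul, mul_one, one_mul, add_zero,
      zero_add, neg_zero, pd_const] at h22
    linear_combination h22 - 2*pd 2 (pd 2 f) p*hμ1
  -- differentiate (0,0)-equation in t
  have hAfun : (fun p : Fin 3 → ℝ => 2*ε*μ⁻¹*exp (2*p 2)*pd 2 f p + 2*pd 0 (pd 0 f) p)
      = (fun p : Fin 3 → ℝ => lam*ε*exp (2*p 2)) := funext hA
  have hA2 : ∀ p : Fin 3 → ℝ,
      pd 2 (fun p : Fin 3 → ℝ => 2*ε*μ⁻¹*exp (2*p 2)*pd 2 f p + 2*pd 0 (pd 0 f) p) p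
        = pd 2 (fun p : Fin 3 → ℝ => lam*ε*exp (2*p 2)) p := fun p => by rw [hAfun]
  have hA'' : ∀ p : Fin 3 → ℝ, 2*μ⁻¹*pd 2 f p + 2*μ⁻¹*pd 2 (pd 2 f) p = lam := by
    intro p
    have dA1 : DifferentiableAt ℝ (fun q : Fin 3 → ℝ => 2*ε*μ⁻¹*exp (2*q 2)*pd 2 f q) p :=
      ((diff_exp_lin 2 2 p).const_mul (2*ε*μ⁻¹)).mul (hdf1 2 p)
    have dA2 : DifferentiableAt ℝ (fun q : Fin 3 → ℝ => 2*pd 0 (pd 0 f) q) p :=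
      (hdf2 0 0 p).const_mul 2
    have hA2p := hA2 p
    simp only [pd_add dA1 dA2, pd_scaled hf, pd_cmuls (contDiff_pd hf 0), pd_aexp] at hA2p
    simp only [Pi.single_apply, fin3_20, fin3_21, fin3_02, fin3_12, fin3_01, fin3_10,
      eq_self_iff_true, if_true, if_false, mul_zero, zero_mul, mul_one, one_mul, add_zero,
      zero_add, neg_zero, pd_const] at hA2p
    have hsw : pd 2 (pd 0 (pd 0 f)) p = pd 0 (pd 0 f) p :=
      (pd_symm (contDiff_pd hf 0) 2 0 p).trans (pd_congr hD 0 p)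
    have hu : 2*pd 0 (pd 0 f) p = 2*ε*μ⁻¹*exp (2*p 2)*pd 2 (pd 2 f) p := by
      linear_combination 2*hA p - hA2p + 2*hsw
    linear_combination (ε*exp (-2*p 2))*(hA p) - (ε*exp (-2*p 2))*hu
      - (2*μ⁻¹*pd 2 f p + 2*μ⁻¹*pd 2 (pd 2 f) p - lam)*(exp (2*p 2)*exp (-2*p 2))*hε2
      - (2*μ⁻¹*pd 2 f p + 2*μ⁻¹*pd 2 (pd 2 f) p - lam)*hexp (p 2)
  -- differentiate (1,1)-equation in t
  have hBfun : (fun p : Fin 3 → ℝ => (-2)*ε*μ⁻¹*exp (-2*p 2)*pd 2 f p + 2*pd 1 (pd 1 f) p)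
      = (fun p : Fin 3 → ℝ => lam*ε*exp (-2*p 2)) := funext hB
  have hB2 : ∀ p : Fin 3 → ℝ,
      pd 2 (fun p : Fin 3 → ℝ => (-2)*ε*μ⁻¹*exp (-2*p 2)*pd 2 f p + 2*pd 1 (pd 1 f) p) p
        = pd 2 (fun p : Fin 3 → ℝ => lam*ε*exp (-2*p 2)) p := fun p => by rw [hBfun]
  have hB'' : ∀ p : Fin 3 → ℝ, (-2)*μ⁻¹*pd 2 f p + 2*μ⁻¹*pd 2 (pd 2 f) p = lam := by
    intro p
    have dB1 : DifferentiableAt ℝ (fun q : Fin 3 → ℝ => (-2)*ε*μ⁻¹*exp (-2*q 2)*pd 2 f q) p :=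
      ((diff_exp_lin (-2) 2 p).const_mul ((-2)*ε*μ⁻¹)).mul (hdf1 2 p)
    have dB2 : DifferentiableAt ℝ (fun q : Fin 3 → ℝ => 2*pd 1 (pd 1 f) q) p :=
      (hdf2 1 1 p).const_mul 2
    have hB2p := hB2 p
    simp only [pd_add dB1 dB2, pd_scaled hf, pd_cmuls (contDiff_pd hf 1), pd_aexp] at hB2p
    simp only [Pi.single_apply, fin3_20, fin3_21, fin3_02, fin3_12, fin3_01, fin3_10,
      eq_self_iff_true, if_true, if_false, mul_zero, zero_mul, mul_one, one_mul, add_zero,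
      zero_add, neg_zero, pd_const] at hB2p
    have hswY : pd 2 (pd 1 (pd 1 f)) p = (-1) * pd 1 (pd 1 f) p :=
      ((pd_symm (contDiff_pd hf 1) 2 1 p).trans (pd_congr hE 1 p)).trans
        (pd_cmuls hf (-1) 1 1 p)
    have hu1 : 2*pd 1 (pd 1 f) p = 2*ε*μ⁻¹*exp (-2*p 2)*pd 2 (pd 2 f) p := by
      linear_combination 2*hB p + hB2p - 2*hswY
    linear_combination (ε*exp (2*p 2))*(hB p) - (ε*exp (2*p 2))*hu1
      - ((-2)*μ⁻¹*pd 2 f p + 2*μ⁻¹*pd 2 (pd 2 f) p - lam)*(exp (2*p 2)*exp (-2*p 2))*hε2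
      - ((-2)*μ⁻¹*pd 2 f p + 2*μ⁻¹*pd 2 (pd 2 f) p - lam)*hexp (p 2)
  -- conclude
  have hs : ∀ p : Fin 3 → ℝ, pd 2 f p = 0 := by
    intro p
    linear_combination (μ/4)*(hA'' p) - (μ/4)*(hB'' p) - pd 2 f p*hμ1
  have hs2 : ∀ p : Fin 3 → ℝ, pd 2 (pd 2 f) p = 0 := by
    intro p
    rw [show pd 2 f = fun _ => (0:ℝ) from funext hs, pd_const]
  have h1 := hA'' (fun _ => 0)
  rw [hs (fun _ => 0), hs2 (fun _ => 0)] at h1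
  have hlam : lam = 0 := by linear_combination -h1
  have h2 := hC (fun _ => 0)
  rw [hs2 (fun _ => 0), hlam] at h2
  norm_num at h2
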